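/- arXiv:0801.2555 — 3 statements merged into one kernel-verified Lean document; each statement's English description precedes it below -/
import Mathlib

section
/- Let W be a symmetric positive definite N×N real matrix and S an N×m real matrix of full column rank m. Then the limit as ρ → ∞ of (ρSSᵀ + W)⁻¹ equals W⁻¹ - W⁻¹S(SᵀW⁻¹S)⁻¹SᵀW⁻¹. -/
/-!
For `ρ > 0` the Woodbury identity gives
`(ρ S Sᵀ + W)⁻¹ = W⁻¹ - W⁻¹ S (ρ⁻¹ I + Sᵀ W⁻¹ S)⁻¹ Sᵀ W⁻¹`.
Full column rank makes `Sᵀ W⁻¹ S` positive definite, hence invertible, so the middle inverse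
tends to `(Sᵀ W⁻¹ S)⁻¹` by continuity of matrix inversion at invertible matrices.
-/

open Matrix Filter Topology

namespace Matrix

variable {n m K : Type*} [Fintype m]

theorem mulVec_injective_of_rank_eq_card [Field K] {A : Matrix n m K}
    (h : A.rank = Fintype.card m) : Function.Injective A.mulVec := by
  rw [mulVec_injective_iff, linearIndependent_iff_card_eq_finrank_span, Set.finrank,
    ← rank_eq_finrank_span_cols, h]

theorem smul_mul_add_inv_eq_sub [Fintype n] [DecidableEq n] [DecidableEq m] [Field K]
    {A : Matrix n n K} (U : Matrix n m K) (V : Matrix m n K) {c : K} (hc : c ≠ 0) (hA : IsUnit A)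
    (hAc : IsUnit (c⁻¹ • 1 + V * A⁻¹ * U)) :
    (c • (U * V) + A)⁻¹ = A⁻¹ - A⁻¹ * U * (c⁻¹ • 1 + V * A⁻¹ * U)⁻¹ * V * A⁻¹ := by
  have hC : IsUnit (c • 1 : Matrix m m K) := isUnit_one.smul (Units.mk0 c hc)
  have hCinv : (c • 1 : Matrix m m K)⁻¹ = c⁻¹ • 1 :=
    inv_eq_right_inv (by rw [smul_mul_smul_comm, mul_one, mul_inv_cancel₀ hc, one_smul])
  rw [← hCinv] at hAc ⊢
  rw [← add_mul_mul_inv_eq_sub A U _ V hA hC hAc, add_comm, Matrix.mul_smul, Matrix.mul_one,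
    Matrix.smul_mul]

theorem continuousAt_inv_of_isUnit [DecidableEq m] [Field K] [TopologicalSpace K]
    [IsTopologicalRing K] [ContinuousInv₀ K] {M : Matrix m m K} (hM : IsUnit M) :
    ContinuousAt Inv.inv M :=
  continuousAt_matrix_inv M <| by
    rw [Ring.inverse_eq_inv']
    exact continuousAt_inv₀ ((isUnit_iff_isUnit_det M).1 hM).ne_zero

end Matrix

theorem limit_inverse_rho_SSt_plus_W {N m : ℕ}
    (W : Matrix (Fin N) (Fin N) ℝ) (S : Matrix (Fin N) (Fin m) ℝ)
    (hW : W.PosDef) (hS : S.rank = m) :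
    Tendsto (fun ρ : ℝ => (ρ • (S * Sᵀ) + W)⁻¹) atTop
      (nhds (W⁻¹ - W⁻¹ * S * (Sᵀ * W⁻¹ * S)⁻¹ * Sᵀ * W⁻¹)) := by
  set M := Sᵀ * W⁻¹ * S
  have hM : M.PosDef := by
    simpa using hW.inv.conjTranspose_mul_mul_same
      (mulVec_injective_of_rank_eq_card (by simpa using hS))
  have hwoodbury : ∀ᶠ ρ : ℝ in atTop,
      W⁻¹ - W⁻¹ * S * (ρ⁻¹ • 1 + M)⁻¹ * Sᵀ * W⁻¹ = (ρ • (S * Sᵀ) + W)⁻¹ := by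
    filter_upwards [eventually_gt_atTop 0] with ρ hρ
    have hunit : IsUnit (ρ⁻¹ • 1 + M) :=
      (PosDef.posSemidef_add (PosSemidef.one.smul (inv_pos.2 hρ).le) hM).isUnit
    exact (smul_mul_add_inv_eq_sub S Sᵀ hρ.ne' hW.isUnit hunit).symm
  have hmiddle : Tendsto (fun ρ : ℝ => ρ⁻¹ • (1 : Matrix (Fin m) (Fin m) ℝ) + M) atTop (𝓝 M) := by
    have h := ((tendsto_inv_atTop_zero (𝕜 := ℝ)).smul_const (1 : Matrix (Fin m) (Fin m) ℝ)).add_const M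
    rwa [zero_smul, zero_add] at h
  have hsandwich : Continuous fun X : Matrix (Fin m) (Fin m) ℝ => W⁻¹ - W⁻¹ * S * X * Sᵀ * W⁻¹ :=
    by fun_prop
  exact (hsandwich.continuousAt.tendsto.comp
    ((continuousAt_inv_of_isUnit hM.isUnit).tendsto.comp hmiddle)).congr' hwoodbury
end

section
/- Let W be a symmetric positive definite N×N real matrix and S an N×m real matrix of full column rank m. Then the limit as ρ → ∞ of ρSᵀ(ρSSᵀ + W)⁻¹ equals (SᵀW⁻¹S)⁻¹SᵀW⁻¹. -/
open Matrix Filter Topology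

/-!
Since `SᵀW⁻¹(ρSSᵀ + W) = (ρA + 1)Sᵀ` with `A = SᵀW⁻¹S`, one gets
`ρSᵀ(ρSSᵀ + W)⁻¹ = (A + ρ⁻¹)⁻¹SᵀW⁻¹` for `ρ > 0`. Full column rank makes `A` positive
definite, hence invertible, and matrix inversion is continuous at `A`.
-/

namespace Matrix

variable {n m K : Type*} [Fintype m]

theorem mulVec_injective_of_rank_eq_card_s1 [Field K] {S : Matrix n m K}
    (hS : S.rank = Fintype.card m) : Function.Injective S.mulVec := by
  have hdim := S.mulVecLin.finrank_range_add_finrank_ker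
  rw [← Matrix.rank, hS, Module.finrank_fintype_fun_eq_card] at hdim
  exact LinearMap.ker_eq_bot.mp (Submodule.finrank_eq_zero.mp
    (by omega : Module.finrank K (LinearMap.ker S.mulVecLin) = 0))

variable [Fintype n] [DecidableEq n] [DecidableEq m]

theorem inv_smul_of_ne_zero [Field K] (M : Matrix n n K) {c : K} (hc : c ≠ 0) :
    (c • M)⁻¹ = c⁻¹ • M⁻¹ := by
  by_cases hM : IsUnit M.det
  · exact inv_smul' M (Units.mk0 c hc) hM
  · have hcM : ¬IsUnit (c • M).det := by
      simpa [det_smul, hc] using hM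
    simp [nonsing_inv_apply_not_isUnit _ hM, nonsing_inv_apply_not_isUnit _ hcM]

/-- The push-through identity. -/
theorem mul_inv_mul_add_eq_inv_mul_add_one_mul [CommRing K] {W : Matrix n n K}
    (hW : IsUnit W.det) {U : Matrix n m K} {V : Matrix m n K} (hB : IsUnit (U * V + W).det)
    (hC : IsUnit (V * W⁻¹ * U + 1).det) :
    V * (U * V + W)⁻¹ = (V * W⁻¹ * U + 1)⁻¹ * (V * W⁻¹) := by
  have intertwine : V * W⁻¹ * (U * V + W) = (V * W⁻¹ * U + 1) * V := by
    rw [Matrix.mul_add, Matrix.mul_assoc V W⁻¹ W, nonsing_inv_mul W hW, Matrix.add_mul]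
    simp only [Matrix.mul_assoc, Matrix.mul_one, Matrix.one_mul]
  calc V * (U * V + W)⁻¹ = (V * W⁻¹ * U + 1)⁻¹ * ((V * W⁻¹ * U + 1) * V) * (U * V + W)⁻¹ := by
        rw [← Matrix.mul_assoc, nonsing_inv_mul _ hC, Matrix.one_mul]
    _ = (V * W⁻¹ * U + 1)⁻¹ * (V * W⁻¹) := by
        rw [← intertwine, Matrix.mul_assoc _ (V * W⁻¹ * (U * V + W)),
          Matrix.mul_assoc (V * W⁻¹), mul_nonsing_inv _ hB, Matrix.mul_one]

theorem tendsto_smul_inv_smul_add_one {A : Matrix m m ℝ} (hA : IsUnit A.det) :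
    Tendsto (fun ρ : ℝ => ρ • (ρ • A + 1)⁻¹) atTop (𝓝 A⁻¹) := by
  have hperturb : Tendsto (fun ρ : ℝ => A + ρ⁻¹ • (1 : Matrix m m ℝ)) atTop (𝓝 A) := by
    simpa using tendsto_const_nhds.add
      ((tendsto_inv_atTop_zero (𝕜 := ℝ)).smul_const (1 : Matrix m m ℝ))
  have hinv : ContinuousAt Inv.inv A :=
    continuousAt_matrix_inv A (NormedRing.inverse_continuousAt hA.unit)
  refine (hinv.tendsto.comp hperturb).congr' ?_
  filter_upwards [eventually_gt_atTop 0] with ρ hρ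
  have hscale := inv_smul_of_ne_zero (ρ • A + 1) (inv_ne_zero hρ.ne')
  rw [inv_inv, smul_add, smul_smul, inv_mul_cancel₀ hρ.ne', one_smul] at hscale
  rw [Function.comp_apply, hscale]

end Matrix

theorem limit_rho_St_inverse {N m : ℕ}
    (W : Matrix (Fin N) (Fin N) ℝ) (S : Matrix (Fin N) (Fin m) ℝ)
    (hW : W.PosDef) (hS : S.rank = m) :
    Tendsto (fun ρ : ℝ => ρ • (Sᵀ * (ρ • (S * Sᵀ) + W)⁻¹)) atTop
      (nhds ((Sᵀ * W⁻¹ * S)⁻¹ * Sᵀ * W⁻¹)) := by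
  set A := Sᵀ * W⁻¹ * S
  have hWdet : IsUnit W.det := (isUnit_iff_isUnit_det W).mp hW.isUnit
  have hA : A.PosDef := by
    simpa using hW.inv.conjTranspose_mul_mul_same
      (mulVec_injective_of_rank_eq_card_s1 (by simpa using hS))
  have hev : ∀ᶠ ρ : ℝ in atTop,
      (ρ • (ρ • A + 1)⁻¹) * (Sᵀ * W⁻¹) = ρ • (Sᵀ * (ρ • (S * Sᵀ) + W)⁻¹) := by
    filter_upwards [eventually_ge_atTop 0] with ρ hρ
    have hB : ((ρ • S) * Sᵀ + W).PosDef := by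
      simpa using PosDef.posSemidef_add ((posSemidef_self_mul_conjTranspose S).smul hρ) hW
    have hC : (Sᵀ * W⁻¹ * (ρ • S) + 1).PosDef := by
      simpa using PosDef.posSemidef_add (hA.posSemidef.smul hρ) PosDef.one
    have hpush := mul_inv_mul_add_eq_inv_mul_add_one_mul hWdet
      ((isUnit_iff_isUnit_det _).mp hB.isUnit) ((isUnit_iff_isUnit_det _).mp hC.isUnit)
    rw [smul_mul, Matrix.mul_smul] at hpush
    rw [smul_mul, ← hpush]
  rw [Matrix.mul_assoc]
  exact (((continuous_id.matrix_mul continuous_const).tendsto _).comp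
    (tendsto_smul_inv_smul_add_one ((isUnit_iff_isUnit_det _).mp hA.isUnit))).congr' hev
end

section
/- Let W be a symmetric positive definite N×N real matrix and S an N×m real matrix of full column rank m. Then the limit as ρ → ∞ of ρI_m - ρ²Sᵀ(ρSSᵀ + W)⁻¹S equals (SᵀW⁻¹S)⁻¹. -/
/-!
For `ρ ≠ 0`, a Woodbury-type identity rewrites `ρ I - ρ² Sᵀ (ρ S Sᵀ + W)⁻¹ S` as
`(ρ⁻¹ I + Sᵀ W⁻¹ S)⁻¹`. Full column rank of `S` makes `Sᵀ W⁻¹ S` positive definite, hence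
invertible, so continuity of matrix inversion at `Sᵀ W⁻¹ S` gives the limit as `ρ⁻¹ → 0`.
-/

open Matrix Filter Topology

theorem Matrix.mulVec_injective_of_rank_eq_card_s2 {K m n : Type*} [Field K] [Fintype n]
    {S : Matrix m n K} (hS : S.rank = Fintype.card n) : Function.Injective S.mulVec :=
  mulVec_injective_iff.2 <| linearIndependent_iff_card_eq_finrank_span.2 <| by
    rw [← hS, rank_eq_finrank_span_cols]; rfl

theorem Matrix.inv_inv_smul_add_mul_inv_mul_eq_sub {K m n : Type*} [Field K]
    [Fintype m] [DecidableEq m] [Fintype n] [DecidableEq n]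
    (W : Matrix n n K) (S : Matrix n m K) (V : Matrix m n K) {ρ : K} (hρ : ρ ≠ 0)
    (hW : IsUnit W.det) (hB : IsUnit (ρ • (S * V) + W).det) :
    (ρ⁻¹ • 1 + V * W⁻¹ * S)⁻¹ = ρ • 1 - ρ ^ 2 • (V * (ρ • (S * V) + W)⁻¹ * S) := by
  set A := V * W⁻¹ * S
  set X := V * (ρ • (S * V) + W)⁻¹ * S
  have hX : ρ • (X * A) + X = A := by
    calc ρ • (X * A) + X = V * (ρ • (S * V) + W)⁻¹ * (ρ • (S * V) + W) * (W⁻¹ * S) := by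
          simp only [X, A, Matrix.mul_add, Matrix.add_mul, Matrix.mul_smul, Matrix.smul_mul,
            Matrix.mul_assoc, mul_nonsing_inv_cancel_left W S hW]
      _ = A := by rw [nonsing_inv_mul_cancel_right _ _ hB, ← Matrix.mul_assoc]
  refine inv_eq_left_inv ?_
  calc (ρ • 1 - ρ ^ 2 • X) * (ρ⁻¹ • 1 + A) = 1 + ρ • A - ρ • (ρ • (X * A) + X) := by
        simp only [Matrix.sub_mul, Matrix.mul_add, Matrix.smul_mul, Matrix.mul_smul,
          Matrix.one_mul, Matrix.mul_one, smul_smul, smul_add]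
        rw [smul_sub, smul_smul, smul_smul, inv_mul_cancel₀ hρ,
          show ρ⁻¹ * ρ ^ 2 = ρ by field_simp]
        module
    _ = 1 := by rw [hX, add_sub_cancel_right]

theorem Matrix.tendsto_inv_smul_one_add {𝕜 m : Type*} [NormedField 𝕜] [Fintype m]
    [DecidableEq m] {A : Matrix m m 𝕜} (hA : A.det ≠ 0) :
    Tendsto (fun ε : 𝕜 => (ε • 1 + A)⁻¹) (𝓝 0) (𝓝 A⁻¹) := by
  have hcont : ContinuousAt Inv.inv A :=
    continuousAt_matrix_inv A (by simpa only [Ring.inverse_eq_inv'] using continuousAt_inv₀ hA)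
  refine hcont.tendsto.comp ?_
  simpa using (tendsto_id (x := 𝓝 (0 : 𝕜))).smul_const (1 : Matrix m m 𝕜) |>.add_const A

theorem limit_rhoI_minus_rhosq {N m : ℕ}
    (W : Matrix (Fin N) (Fin N) ℝ) (S : Matrix (Fin N) (Fin m) ℝ)
    (hW : W.PosDef) (hS : S.rank = m) :
    Tendsto (fun ρ : ℝ => ρ • (1 : Matrix (Fin m) (Fin m) ℝ)
        - (ρ ^ 2) • (Sᵀ * (ρ • (S * Sᵀ) + W)⁻¹ * S)) atTop
      (nhds ((Sᵀ * W⁻¹ * S)⁻¹)) := by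
  have hA : (Sᵀ * W⁻¹ * S).PosDef := by
    simpa using hW.inv.conjTranspose_mul_mul_same (S.mulVec_injective_of_rank_eq_card_s2 (by simpa))
  have hSS : (S * Sᵀ).PosSemidef := by
    simpa using posSemidef_self_mul_conjTranspose S
  refine ((tendsto_inv_smul_one_add hA.det_pos.ne').comp tendsto_inv_atTop_zero).congr' ?_
  filter_upwards [eventually_gt_atTop 0] with ρ hρ
  exact inv_inv_smul_add_mul_inv_mul_eq_sub W S Sᵀ hρ.ne' hW.det_pos.ne'.isUnit
    (PosDef.posSemidef_add (hSS.smul hρ.le) hW).det_pos.ne'.isUnit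
end
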